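/- Let l ≥ 1, let n₁, …, n_l be positive integers and a₁, …, a_l integers. Assume: (i) there is some i with n_i odd and a_i = −1; (ii) there is some j with |a_j| > 1; (iii) a_k ≠ −1 for every k with n_k even; and (iv) a_k ≠ 1 for every k with n_k odd. Then ℓ(m) = 0 whenever 4 ∣ m, and there exists N > 0 such that for every odd integer m > N one has ℓ(m) ≠ 0 and ℓ(2m) ≠ 0, where ℓ(m) := ∑_{r ∣ m} μ(m/r) ∏_{i=1}^{l} (1 + (−1)^{n_i} a_i^r). -/

import Mathlib

/-!
For even `r` the factor `1 + (-1)^{nᵢ} aᵢ^r` of an odd sphere with `aᵢ = -1` vanishes, so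
`L(r) = 0` and only odd divisors `r` contribute to `ℓ(m)`. If `4 ∣ m`, then `4 ∣ m / r` for
each of them, so `μ(m / r) = 0`. For odd `m`, the odd divisors of `2m` are the divisors of `m`
and `μ(2m / r) = -μ(m / r)`, so `ℓ(2m) = -ℓ(m)`.

For odd `r`, `(-1)^{nᵢ} aᵢ^r = ((-1)^{nᵢ} aᵢ)^r`, and hypotheses (iii), (iv) say that
`(-1)^{nᵢ} aᵢ ≠ -1`; so each factor is a nonzero integer, comparable to `max(|aᵢ|, 1)^r`
within a factor 2. With `P = ∏ max(|aᵢ|, 1) ≥ 2` this gives `P^m ≤ 2^l |L(m)|` for odd `m`,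
while the proper divisors of an odd `m` are at most `m / 3` and contribute at most
`m 2^l P^{m/3}` to `ℓ(m)`, which is eventually smaller than `|L(m)|`.
-/

open Finset ArithmeticFunction

def moebiusSum (f : ℕ → ℤ) (m : ℕ) : ℤ :=
  ∑ r ∈ m.divisors, moebius (m / r) * f r

theorem moebiusSum_eq_zero_of_four_dvd {f : ℕ → ℤ} (hf : ∀ r, Even r → f r = 0) {m : ℕ}
    (hm : 4 ∣ m) : moebiusSum f m = 0 := by
  refine sum_eq_zero fun r hr => ?_
  rcases Nat.even_or_odd r with hr_even | hr_odd
  · rw [hf r hr_even, mul_zero]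
  · have hrm : r ∣ m := Nat.dvd_of_mem_divisors hr
    have hcop : Nat.Coprime (2 ^ 2) r := (Nat.coprime_two_left.mpr hr_odd).pow_left 2
    have h4 : 2 * 2 ∣ m / r := hcop.dvd_of_dvd_mul_left (by rwa [Nat.mul_div_cancel' hrm])
    have hsq : ¬ Squarefree (m / r) := fun h => by simpa [Nat.isUnit_iff] using h 2 h4
    rw [moebius_eq_zero_of_not_squarefree hsq, zero_mul]

theorem moebiusSum_two_mul_of_odd {f : ℕ → ℤ} (hf : ∀ r, Even r → f r = 0) {m : ℕ}
    (hm : Odd m) : moebiusSum f (2 * m) = -moebiusSum f m := by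
  have hsub : m.divisors ⊆ (2 * m).divisors :=
    Nat.divisors_subset_of_dvd (by simp [hm.pos.ne']) (dvd_mul_left m 2)
  unfold moebiusSum
  rw [← sum_subset hsub, ← sum_neg_distrib]
  · refine sum_congr rfl fun r hr => ?_
    have hrm : r ∣ m := Nat.dvd_of_mem_divisors hr
    have hcop : Nat.Coprime 2 (m / r) :=
      Nat.coprime_two_left.mpr (hm.of_dvd_nat (Nat.div_dvd_of_dvd hrm))
    rw [Nat.mul_div_assoc 2 hrm, isMultiplicative_moebius.map_mul_of_coprime hcop,
      moebius_apply_prime Nat.prime_two]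
    ring
  · intro r hr hr'
    rcases Nat.even_or_odd r with hr_even | hr_odd
    · rw [hf r hr_even, mul_zero]
    · have hrm : r ∣ m :=
        (Nat.coprime_two_right.mpr hr_odd).dvd_of_dvd_mul_left (Nat.dvd_of_mem_divisors hr)
      exact absurd (Nat.mem_divisors.mpr ⟨hrm, hm.pos.ne'⟩) hr'

theorem moebiusSum_ne_zero_of_sum_properDivisors_lt {f : ℕ → ℤ} {m : ℕ} (hm : m ≠ 0)
    (h : ∑ r ∈ m.properDivisors, |f r| < |f m|) : moebiusSum f m ≠ 0 := by
  rw [moebiusSum, ← Nat.cons_self_properDivisors hm, sum_cons, Nat.div_self (Nat.pos_of_ne_zero hm),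
    moebius_apply_one, one_mul]
  intro h0
  have : |f m| ≤ ∑ r ∈ m.properDivisors, |f r| :=
    calc |f m| = |∑ r ∈ m.properDivisors, moebius (m / r) * f r| := by
          rw [eq_neg_of_add_eq_zero_left h0, abs_neg]
      _ ≤ ∑ r ∈ m.properDivisors, |moebius (m / r) * f r| := abs_sum_le_sum_abs _ _
      _ ≤ ∑ r ∈ m.properDivisors, |f r| := sum_le_sum fun r _ => by
          rw [abs_mul]; exact mul_le_of_le_one_left (abs_nonneg _) abs_moebius_le_one
  linarith

theorem Nat.le_div_three_of_mem_properDivisors_of_odd {m r : ℕ} (hm : Odd m)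
    (hr : r ∈ m.properDivisors) : r ≤ m / 3 := by
  obtain ⟨⟨k, rfl⟩, hlt⟩ := Nat.mem_properDivisors.mp hr
  obtain ⟨j, rfl⟩ : Odd k := hm.of_dvd_nat (dvd_mul_left k r)
  have hj : j ≠ 0 := by rintro rfl; simp at hlt
  rw [Nat.le_div_iff_mul_le three_pos]
  exact Nat.mul_le_mul_left r (by omega)

theorem Nat.card_properDivisors_le (m : ℕ) : #m.properDivisors ≤ m :=
  (card_filter_le _ _).trans (by simp)

theorem moebiusSum_ne_zero_of_growth {f : ℕ → ℤ} {C P : ℤ} {m : ℕ} (hP : 2 ≤ P)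
    (hupper : ∀ r, |f r| ≤ C * P ^ r) (hlower : P ^ m ≤ C * |f m|) (hm : Odd m)
    (hgrowth : C ^ 2 * m < 2 ^ (m - m / 3)) : moebiusSum f m ≠ 0 := by
  have hC : 0 ≤ C := by simpa using (abs_nonneg _).trans (hupper 0)
  have hproper : ∑ r ∈ m.properDivisors, |f r| ≤ m * (C * P ^ (m / 3)) :=
    calc ∑ r ∈ m.properDivisors, |f r| ≤ ∑ r ∈ m.properDivisors, C * P ^ (m / 3) :=
          sum_le_sum fun r hr => (hupper r).trans <| by
            gcongr
            exacts [by linarith, Nat.le_div_three_of_mem_properDivisors_of_odd hm hr]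
      _ = #m.properDivisors * (C * P ^ (m / 3)) := by rw [sum_const, nsmul_eq_mul]
      _ ≤ m * (C * P ^ (m / 3)) := by
          gcongr
          exact_mod_cast Nat.card_properDivisors_le m
  refine moebiusSum_ne_zero_of_sum_properDivisors_lt hm.pos.ne' (lt_of_mul_lt_mul_left ?_ hC)
  calc C * ∑ r ∈ m.properDivisors, |f r| ≤ C ^ 2 * m * P ^ (m / 3) :=
        (mul_le_mul_of_nonneg_left hproper hC).trans_eq (by ring)
    _ < P ^ (m - m / 3) * P ^ (m / 3) := by
        gcongr
        exact hgrowth.trans_le (pow_le_pow_left₀ two_pos.le hP _)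
    _ = P ^ m := by rw [← pow_add, Nat.sub_add_cancel (Nat.div_le_self _ _)]
    _ ≤ C * |f m| := hlower

theorem two_pow_sq_mul_lt_two_pow {l m : ℕ} (hm : 6 * l + 9 < m) :
    (2 ^ l) ^ 2 * m < 2 ^ (m - m / 3) := by
  have hm4 : m < 2 ^ (m / 4 + 2) := by
    have := (m / 4).lt_two_pow_self
    rw [pow_add]
    omega
  calc (2 ^ l) ^ 2 * m < 2 ^ (2 * l) * 2 ^ (m / 4 + 2) := by
        rw [← pow_mul, mul_comm l]
        exact Nat.mul_lt_mul_of_le_of_lt le_rfl hm4 (by positivity)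
    _ = 2 ^ (2 * l + (m / 4 + 2)) := (pow_add _ _ _).symm
    _ ≤ 2 ^ (m - m / 3) := Nat.pow_le_pow_right two_pos (by omega)

theorem abs_one_add_neg_one_pow_mul_pow_le {R : Type*} [Ring R] [LinearOrder R]
    [IsStrictOrderedRing R] (k r : ℕ) (b : R) :
    |1 + (-1) ^ k * b ^ r| ≤ 2 * max |b| 1 ^ r :=
  calc |1 + (-1) ^ k * b ^ r| ≤ 1 + |b| ^ r := by
        simpa [abs_mul, abs_pow] using abs_add_le (1 : R) ((-1) ^ k * b ^ r)
    _ ≤ max |b| 1 ^ r + max |b| 1 ^ r := by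
        gcongr
        · exact one_le_pow₀ (le_max_right _ _)
        · exact le_max_left _ _
    _ = 2 * max |b| 1 ^ r := (two_mul _).symm

theorem Int.max_abs_one_pow_le_two_mul_abs_one_add_pow {b : ℤ} (hb : b ≠ -1) {r : ℕ}
    (hr : Odd r) : max |b| 1 ^ r ≤ 2 * |1 + b ^ r| := by
  have hne : 1 + b ^ r ≠ 0 := fun h =>
    hb (hr.strictMono_pow.injective (by rw [hr.neg_one_pow]; linarith))
  rcases le_or_gt |b| 1 with hb1 | hb1
  · rw [max_eq_right hb1, one_pow]
    linarith [Int.one_le_abs hne]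
  · rw [max_eq_left hb1.le]
    have h2 : 2 ≤ |b| ^ r := (show (2 : ℤ) ≤ |b| from hb1).trans (le_self_pow₀ hb1.le hr.pos.ne')
    have h1 : |b| ^ r - 1 ≤ |1 + b ^ r| := by
      simpa [abs_pow, add_comm] using abs_sub_abs_le_abs_sub (b ^ r) (-1)
    linarith

section LefschetzNumber

variable {ι : Type*} [Fintype ι]

def lefschetzNumber (n : ι → ℕ) (a : ι → ℤ) (r : ℕ) : ℤ :=
  ∏ i, (1 + (-1) ^ n i * a i ^ r)

theorem lefschetzNumber_eq_zero_of_even {n : ι → ℕ} {a : ι → ℤ}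
    (h : ∃ i, Odd (n i) ∧ a i = -1) {r : ℕ} (hr : Even r) : lefschetzNumber n a r = 0 := by
  obtain ⟨i, hi_odd, hi⟩ := h
  refine prod_eq_zero (mem_univ i) ?_
  rw [hi, hi_odd.neg_one_pow, hr.neg_one_pow]
  ring

theorem abs_lefschetzNumber_le (n : ι → ℕ) (a : ι → ℤ) (r : ℕ) :
    |lefschetzNumber n a r| ≤ 2 ^ Fintype.card ι * (∏ i, max |a i| 1) ^ r := by
  rw [lefschetzNumber, abs_prod, ← prod_pow, ← card_univ, ← prod_const, ← prod_mul_distrib]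
  exact prod_le_prod (fun i _ => abs_nonneg _)
    fun i _ => abs_one_add_neg_one_pow_mul_pow_le (n i) r (a i)

theorem pow_le_two_pow_mul_abs_lefschetzNumber {n : ι → ℕ} {a : ι → ℤ}
    (ha : ∀ i, (-1) ^ n i * a i ≠ -1) {r : ℕ} (hr : Odd r) :
    (∏ i, max |a i| 1) ^ r ≤ 2 ^ Fintype.card ι * |lefschetzNumber n a r| := by
  rw [lefschetzNumber, abs_prod, ← prod_pow, ← card_univ, ← prod_const, ← prod_mul_distrib]
  refine prod_le_prod (fun i _ => by positivity) fun i _ => ?_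
  have hodd_power : (-1) ^ n i * a i ^ r = ((-1) ^ n i * a i) ^ r := by
    rw [mul_pow, ← pow_mul, mul_comm (n i) r, pow_mul, hr.neg_one_pow]
  simpa [hodd_power, abs_mul] using Int.max_abs_one_pow_le_two_mul_abs_one_add_pow (ha i) hr

end LefschetzNumber

theorem lefschetz_period_numbers_odd_case_general
    (l : ℕ) (n : Fin l → ℕ) (a : Fin l → ℤ)
    (h1 : ∃ i, Odd (n i) ∧ a i = -1)
    (h2 : ∃ j, 1 < |a j|)
    (h3 : ∀ k, Even (n k) → a k ≠ -1)
    (h4 : ∀ k, Odd (n k) → a k ≠ 1) :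
    (∀ m : ℕ, 0 < m → 4 ∣ m →
      (∑ r ∈ m.divisors, ArithmeticFunction.moebius (m / r) *
          ∏ i, (1 + (-1) ^ n i * a i ^ r)) = 0) ∧
    ∃ N : ℕ, 0 < N ∧ ∀ m : ℕ, N < m → Odd m →
      (∑ r ∈ m.divisors, ArithmeticFunction.moebius (m / r) *
          ∏ i, (1 + (-1) ^ n i * a i ^ r)) ≠ 0 ∧
      (∑ r ∈ (2 * m).divisors, ArithmeticFunction.moebius (2 * m / r) *
          ∏ i, (1 + (-1) ^ n i * a i ^ r)) ≠ 0 := by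
  have hL_even : ∀ r, Even r → lefschetzNumber n a r = 0 :=
    fun _ => lefschetzNumber_eq_zero_of_even h1
  have hsigned : ∀ i, (-1) ^ n i * a i ≠ -1 := fun i => by
    rcases Nat.even_or_odd (n i) with h | h
    · simpa [h.neg_one_pow] using h3 i h
    · simpa [h.neg_one_pow] using h4 i h
  obtain ⟨j, hj⟩ := h2
  have hP : 2 ≤ ∏ i, max |a i| 1 :=
    (show (2 : ℤ) ≤ |a j| from hj).trans (le_prod_max_one (mem_univ j) fun i => |a i|)
  refine ⟨fun m _ hm => moebiusSum_eq_zero_of_four_dvd hL_even hm, 6 * l + 9, by omega,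
    fun m hm hm_odd => ?_⟩
  have hne : moebiusSum (lefschetzNumber n a) m ≠ 0 := by
    refine moebiusSum_ne_zero_of_growth hP (abs_lefschetzNumber_le n a)
      (pow_le_two_pow_mul_abs_lefschetzNumber hsigned hm_odd) hm_odd ?_
    rw [Fintype.card_fin]
    exact_mod_cast two_pow_sq_mul_lt_two_pow hm
  refine ⟨hne, ?_⟩
  rw [← neg_ne_zero, ← moebiusSum_two_mul_of_odd hL_even hm_odd] at hne
  exact hne

/-- If some `nᵢ` is odd with `aᵢ = -1`, some `|aⱼ| > 1`, no even-dimensional eigenvalue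
equals `-1` and no odd-dimensional eigenvalue equals `1`, then `ℓ(m) = 0` whenever
`4 ∣ m`, while `ℓ(m) ≠ 0` and `ℓ(2m) ≠ 0` for every sufficiently large odd `m`, where
`ℓ(m) = ∑_{r∣m} μ(m/r) ∏ᵢ (1 + (-1)^{nᵢ} aᵢʳ)`. -/
theorem lefschetz_period_numbers_odd_case
    (l : ℕ) (hl : 1 ≤ l) (n : Fin l → ℕ) (hn : ∀ i, 0 < n i) (a : Fin l → ℤ)
    (h1 : ∃ i, Odd (n i) ∧ a i = -1)
    (h2 : ∃ j, 1 < |a j|)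
    (h3 : ∀ k, Even (n k) → a k ≠ -1)
    (h4 : ∀ k, Odd (n k) → a k ≠ 1) :
    (∀ m : ℕ, 0 < m → 4 ∣ m →
      (∑ r ∈ m.divisors, ArithmeticFunction.moebius (m / r) *
          ∏ i, (1 + (-1) ^ n i * a i ^ r)) = 0) ∧
    ∃ N : ℕ, 0 < N ∧ ∀ m : ℕ, N < m → Odd m →
      (∑ r ∈ m.divisors, ArithmeticFunction.moebius (m / r) *
          ∏ i, (1 + (-1) ^ n i * a i ^ r)) ≠ 0 ∧
      (∑ r ∈ (2 * m).divisors, ArithmeticFunction.moebius (2 * m / r) *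
          ∏ i, (1 + (-1) ^ n i * a i ^ r)) ≠ 0 :=
  lefschetz_period_numbers_odd_case_general l n a h1 h2 h3 h4
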